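/- If G ~ IG(αt, β) with α, β, t > 0, then for every r ∈ ℝ the r-th moment of G is E[G^r] = (αt/β)^r · K_{r-1/2}(αβt) / K_{-1/2}(αβt), where K_ν is the modified Bessel function of the third kind. -/

import Mathlib

/-!
Substituting `x = (a / b) y` turns the `r`-th moment of `IG(a, b)` into
`(2π)^{-1/2} a e^{ab} · 2 (a / b)^{r - 1/2} K_{r - 1/2}(ab)`, so the moment formula is the
ratio of this expression to its value at `r = 0`, which is `1`. That the density is normalised
is the closed form `K_{-1/2}(ω) = √(π / (2ω)) e^{-ω}`: after `x = s²`, the symmetry `s ↦ s⁻¹`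
gives `2 K_{-1/2}(ω) = ∫ (1 + s⁻²) exp(-(ω/2)(s² + s⁻²)) ds`, and since
`s² + s⁻² = (s - s⁻¹)² + 2`, the substitution `u = s - s⁻¹` reduces this to a Gaussian integral.
-/

open MeasureTheory Real Set

/-- Integral representation of the modified Bessel function of the third kind. -/
noncomputable def besselK (ν ω : ℝ) : ℝ :=
  (1/2) * ∫ x in Ioi (0:ℝ), x ^ (ν - 1) * Real.exp (-(ω/2) * (x + x⁻¹))

/-- The inverse Gaussian density IG(a, b). -/
noncomputable def igPdf (a b x : ℝ) : ℝ :=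
  (2 * π) ^ (-(1:ℝ)/2) * a * x ^ (-(3:ℝ)/2) *
    Real.exp (a * b - (1/2) * (a^2 * x⁻¹ + b^2 * x))

section SubInv

variable {E : Type*} [NormedAddCommGroup E] [NormedSpace ℝ E]

lemma hasDerivAt_sub_inv {s : ℝ} (hs : s ≠ 0) :
    HasDerivAt (fun s : ℝ => s - s⁻¹) (1 + (s ^ 2)⁻¹) s := by
  simpa only [sub_neg_eq_add] using (hasDerivAt_id' s).fun_sub (hasDerivAt_inv hs)

lemma strictMonoOn_sub_inv : StrictMonoOn (fun s : ℝ => s - s⁻¹) (Ioi 0) :=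
  fun _ hx _ hy hxy => sub_lt_sub hxy ((inv_lt_inv₀ hy hx).mpr hxy)

lemma image_sub_inv_Ioi : (fun s : ℝ => s - s⁻¹) '' Ioi 0 = univ := by
  refine eq_univ_of_forall fun u => ?_
  -- the positive root of `s ^ 2 - u * s - 1`
  set s := (u + √(u ^ 2 + 4)) / 2 with hs_def
  have hsq : √(u ^ 2 + 4) ^ 2 = u ^ 2 + 4 := sq_sqrt (by positivity)
  have hu : |u| < √(u ^ 2 + 4) := (lt_sqrt (abs_nonneg u)).mpr (by rw [sq_abs]; linarith)
  have hs : 0 < s := by linarith [neg_abs_le u]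
  refine ⟨s, hs, ?_⟩
  have hroot : s * (s - u) = 1 := by rw [hs_def]; nlinarith
  have hinv : s⁻¹ = s - u := inv_eq_of_mul_eq_one_right hroot
  simp only [hinv]; ring

private lemma hasDerivWithinAt_sub_inv :
    ∀ s ∈ Ioi (0 : ℝ), HasDerivWithinAt (fun s : ℝ => s - s⁻¹) (1 + (s ^ 2)⁻¹) (Ioi 0) s :=
  fun _ hs => (hasDerivAt_sub_inv (ne_of_gt hs)).hasDerivWithinAt

theorem integral_Ioi_comp_sub_inv (g : ℝ → E) :
    ∫ s in Ioi 0, (1 + (s ^ 2)⁻¹) • g (s - s⁻¹) = ∫ u, g u := by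
  have := integral_image_eq_integral_abs_deriv_smul measurableSet_Ioi hasDerivWithinAt_sub_inv
    strictMonoOn_sub_inv.injOn g
  rw [image_sub_inv_Ioi, setIntegral_univ] at this
  rw [this]
  refine setIntegral_congr_fun measurableSet_Ioi fun s _ => ?_
  rw [abs_of_pos (by positivity)]

theorem integrableOn_Ioi_comp_sub_inv_iff (g : ℝ → E) :
    IntegrableOn (fun s => (1 + (s ^ 2)⁻¹) • g (s - s⁻¹)) (Ioi 0) ↔ Integrable g := by
  have := integrableOn_image_iff_integrableOn_abs_deriv_smul measurableSet_Ioi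
    hasDerivWithinAt_sub_inv strictMonoOn_sub_inv.injOn g
  rw [image_sub_inv_Ioi, integrableOn_univ] at this
  rw [this]
  refine integrableOn_congr_fun (fun s _ => ?_) measurableSet_Ioi
  rw [abs_of_pos (by positivity)]

theorem integral_Ioi_inv_sq_smul_comp_inv (f : ℝ → E) :
    ∫ s in Ioi 0, (s ^ 2)⁻¹ • f s⁻¹ = ∫ s in Ioi 0, f s := by
  rw [← integral_comp_rpow_Ioi f (p := -1) (by norm_num)]
  refine setIntegral_congr_fun measurableSet_Ioi fun s (hs : 0 < s) => ?_
  rw [rpow_neg_one, show (-1 : ℝ) - 1 = -(2 : ℕ) by norm_num, rpow_neg hs.le, rpow_natCast]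
  simp

end SubInv

theorem besselK_eq_integral_sq (ν ω : ℝ) :
    besselK ν ω = ∫ s in Ioi 0, s ^ (2 * ν - 1) * exp (-(ω / 2) * (s ^ 2 + (s ^ 2)⁻¹)) := by
  rw [besselK, ← integral_comp_rpow_Ioi_of_pos two_pos, ← integral_const_mul]
  refine setIntegral_congr_fun measurableSet_Ioi fun s (hs : 0 < s) => ?_
  have hpow : s ^ (2 * ν - 1) = s ^ ((2 : ℝ) - 1) * (s ^ (2 : ℝ)) ^ (ν - 1) := by
    rw [← rpow_mul hs.le, ← rpow_add hs]; ring_nf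
  rw [hpow, rpow_two, smul_eq_mul]
  ring

lemma exp_neg_mul_sq_add_inv_sq {s : ℝ} (ω : ℝ) (hs : s ≠ 0) :
    exp (-(ω / 2) * (s ^ 2 + (s ^ 2)⁻¹)) = exp (-ω) * exp (-(ω / 2) * (s - s⁻¹) ^ 2) := by
  rw [← exp_add]
  congr 1
  field_simp
  ring

theorem integrableOn_one_add_inv_sq_mul_exp {ω : ℝ} (hω : 0 < ω) :
    IntegrableOn (fun s => (1 + (s ^ 2)⁻¹) * exp (-(ω / 2) * (s ^ 2 + (s ^ 2)⁻¹))) (Ioi 0) := by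
  have hg : Integrable fun u : ℝ => exp (-ω) * exp (-(ω / 2) * u ^ 2) :=
    (integrable_exp_neg_mul_sq (half_pos hω)).const_mul _
  refine ((integrableOn_Ioi_comp_sub_inv_iff _).mpr hg).congr_fun (fun s (hs : 0 < s) => ?_)
    measurableSet_Ioi
  simp only [exp_neg_mul_sq_add_inv_sq ω hs.ne', smul_eq_mul]

theorem integral_one_add_inv_sq_mul_exp (ω : ℝ) :
    ∫ s in Ioi 0, (1 + (s ^ 2)⁻¹) * exp (-(ω / 2) * (s ^ 2 + (s ^ 2)⁻¹))
      = exp (-ω) * √(π / (ω / 2)) := by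
  calc ∫ s in Ioi 0, (1 + (s ^ 2)⁻¹) * exp (-(ω / 2) * (s ^ 2 + (s ^ 2)⁻¹))
      = ∫ s in Ioi 0, (1 + (s ^ 2)⁻¹) • (exp (-ω) * exp (-(ω / 2) * (s - s⁻¹) ^ 2)) :=
        setIntegral_congr_fun measurableSet_Ioi fun s (hs : 0 < s) => by
          rw [exp_neg_mul_sq_add_inv_sq ω hs.ne', smul_eq_mul]
    _ = ∫ u, exp (-ω) * exp (-(ω / 2) * u ^ 2) :=
        integral_Ioi_comp_sub_inv fun u => exp (-ω) * exp (-(ω / 2) * u ^ 2)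
    _ = exp (-ω) * √(π / (ω / 2)) := by rw [integral_const_mul, integral_gaussian]

theorem besselK_neg_half {ω : ℝ} (hω : 0 < ω) :
    besselK (-(1 / 2)) ω = √(π / (2 * ω)) * exp (-ω) := by
  set h : ℝ → ℝ := fun s => exp (-(ω / 2) * (s ^ 2 + (s ^ 2)⁻¹)) with h_def
  have hK : besselK (-(1 / 2)) ω = ∫ s in Ioi 0, (s ^ 2)⁻¹ * h s := by
    rw [besselK_eq_integral_sq]
    refine setIntegral_congr_fun measurableSet_Ioi fun s (hs : 0 < s) => ?_
    rw [show 2 * (-(1 / 2) : ℝ) - 1 = -(2 : ℕ) by norm_num, rpow_neg hs.le, rpow_natCast]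
  -- `h` is invariant under `s ↦ s⁻¹`, which turns the weight `s⁻²` into `1`
  have hsymm : ∫ s in Ioi 0, (s ^ 2)⁻¹ * h s = ∫ s in Ioi 0, h s := by
    rw [← integral_Ioi_inv_sq_smul_comp_inv h]
    refine setIntegral_congr_fun measurableSet_Ioi fun s _ => ?_
    simp only [h_def, smul_eq_mul, inv_pow, inv_inv, add_comm (s ^ 2)⁻¹]
  have hint := integrableOn_one_add_inv_sq_mul_exp hω
  have hmeas : AEStronglyMeasurable h := by fun_prop
  have hint_h : IntegrableOn h (Ioi 0) := by
    refine hint.mono' hmeas.restrict (ae_of_all _ fun s => ?_)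
    rw [norm_of_nonneg (exp_pos _).le]
    exact le_mul_of_one_le_left (exp_pos _).le (le_add_of_nonneg_right (by positivity))
  have hint_inv : IntegrableOn (fun s => (s ^ 2)⁻¹ * h s) (Ioi 0) := by
    refine hint.mono' (by fun_prop) (ae_of_all _ fun s => ?_)
    rw [norm_of_nonneg (by positivity)]
    exact mul_le_mul_of_nonneg_right (le_add_of_nonneg_left zero_le_one) (exp_pos _).le
  have htwice : 2 * besselK (-(1 / 2)) ω = exp (-ω) * √(π / (ω / 2)) := by
    rw [← integral_one_add_inv_sq_mul_exp, two_mul]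
    nth_rewrite 1 [hK, hsymm]
    rw [hK, ← integral_add hint_h hint_inv]
    exact setIntegral_congr_fun measurableSet_Ioi fun s _ => by ring
  have hsqrt : √(π / (ω / 2)) = 2 * √(π / (2 * ω)) := by
    rw [show π / (ω / 2) = 2 ^ 2 * (π / (2 * ω)) by field_simp,
      sqrt_mul (by positivity), sqrt_sq zero_le_two]
  linear_combination (htwice + exp (-ω) * hsqrt) / 2

theorem integral_rpow_mul_exp_eq_besselK (ν : ℝ) {a b : ℝ} (ha : 0 < a) (hb : 0 < b) :
    ∫ x in Ioi 0, x ^ (ν - 1) * exp (-(1 / 2) * (a ^ 2 * x⁻¹ + b ^ 2 * x))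
      = 2 * (a / b) ^ ν * besselK ν (a * b) := by
  have hc : 0 < a / b := div_pos ha hb
  have hsubst := integral_comp_mul_left_Ioi'
    (fun x : ℝ => x ^ (ν - 1) * exp (-(1 / 2) * (a ^ 2 * x⁻¹ + b ^ 2 * x))) 0 hc
  rw [mul_zero] at hsubst
  rw [← hsubst, smul_eq_mul, besselK, ← mul_assoc, ← integral_const_mul, ← integral_const_mul]
  refine setIntegral_congr_fun measurableSet_Ioi fun y (hy : 0 < y) => ?_
  have hexp : -(1 / 2) * (a ^ 2 * (a / b * y)⁻¹ + b ^ 2 * (a / b * y))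
      = -(a * b / 2) * (y + y⁻¹) := by
    field_simp
    ring
  rw [hexp, mul_rpow hc.le hy.le, rpow_sub_one hc.ne']
  field_simp

theorem integral_rpow_mul_igPdf (r : ℝ) {a b : ℝ} (ha : 0 < a) (hb : 0 < b) :
    ∫ x in Ioi 0, x ^ r * igPdf a b x
      = (2 * π) ^ (-(1 : ℝ) / 2) * a * exp (a * b) *
        (2 * (a / b) ^ (r - 1 / 2) * besselK (r - 1 / 2) (a * b)) := by
  rw [← integral_rpow_mul_exp_eq_besselK _ ha hb, ← integral_const_mul]
  refine setIntegral_congr_fun measurableSet_Ioi fun x (hx : 0 < x) => ?_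
  have hpow : x ^ r * x ^ (-(3 : ℝ) / 2) = x ^ (r - 1 / 2 - 1) := by
    rw [← rpow_add hx]; ring_nf
  rw [igPdf, sub_eq_add_neg, exp_add, ← hpow]
  ring_nf

theorem integral_igPdf {a b : ℝ} (ha : 0 < a) (hb : 0 < b) :
    ∫ x in Ioi 0, igPdf a b x = 1 := by
  have h := integral_rpow_mul_igPdf 0 ha hb
  simp only [rpow_zero, one_mul] at h
  have hsqrt : ∀ x : ℝ, 0 ≤ x → x ^ (-(1 / 2) : ℝ) = (√x)⁻¹ := fun x hx => by
    rw [rpow_neg hx, sqrt_eq_rpow]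
  rw [h, zero_sub, besselK_neg_half (mul_pos ha hb), neg_div, hsqrt _ (by positivity),
    hsqrt _ (by positivity), exp_neg, sqrt_div' _ hb.le, sqrt_div' _ (by positivity),
    sqrt_mul zero_le_two, sqrt_mul zero_le_two, sqrt_mul ha.le]
  field_simp
  rw [sq_sqrt zero_le_two, sq_sqrt ha.le]
  ring

theorem ig_moments (α β t r : ℝ) (hα : 0 < α) (hβ : 0 < β) (ht : 0 < t) :
    ∫ x in Ioi (0:ℝ), x ^ r * igPdf (α * t) β x
      = (α * t / β) ^ r * besselK (r - 1/2) (α * β * t) / besselK (-(1/2)) (α * β * t) := by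
  have ha : 0 < α * t := mul_pos hα ht
  have hc : 0 < α * t / β := div_pos ha hβ
  have hK0 := integral_rpow_mul_igPdf 0 ha hβ
  simp only [rpow_zero, one_mul, integral_igPdf ha hβ, zero_sub] at hK0
  rw [integral_rpow_mul_igPdf r ha hβ, mul_right_comm α β]
  have hK0_ne : besselK (-(1 / 2)) (α * t * β) ≠ 0 :=
    right_ne_zero_of_mul (right_ne_zero_of_mul (hK0 ▸ one_ne_zero))
  have hpow : (α * t / β) ^ (r - 1 / 2) = (α * t / β) ^ r * (α * t / β) ^ (-(1 / 2) : ℝ) := by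
    rw [← rpow_add hc]; ring_nf
  rw [eq_div_iff hK0_ne, hpow]
  linear_combination -(α * t / β) ^ r * besselK (r - 1 / 2) (α * t * β) * hK0
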